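/- Let V be a finite-dimensional real vector space and let ω₁ and ω₂ be linear symplectic forms on V. Assume that every complex structure J on V that is compatible with ω₁ is also compatible with ω₂. Then there exists a real number λ > 0 such that ω₂ = λ · ω₁; in particular the set of complex structures compatible with ω₁ coincides with the set of complex structures compatible with ω₂. -/

import Mathlib

/-- A linear symplectic form: an alternating, nondegenerate bilinear form. -/
def IsSymplecticForm {V : Type*} [AddCommGroup V] [Module ℝ V]
    (ω : V →ₗ[ℝ] V →ₗ[ℝ] ℝ) : Prop :=
  (∀ v, ω v v = 0) ∧ ∀ v, v ≠ 0 → ∃ w, ω v w ≠ 0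

/-- A complex structure: a linear endomorphism with `J ∘ J = -id`. -/
def IsComplexStructure {V : Type*} [AddCommGroup V] [Module ℝ V]
    (J : V →ₗ[ℝ] V) : Prop :=
  ∀ v, J (J v) = -v

/-- `J` is compatible with `ω`: tamed by `ω` and `ω(Ju, Jv) = ω(u, v)`. -/
def CompatibleWith {V : Type*} [AddCommGroup V] [Module ℝ V]
    (ω : V →ₗ[ℝ] V →ₗ[ℝ] ℝ) (J : V →ₗ[ℝ] V) : Prop :=
  (∀ v, v ≠ 0 → 0 < ω v (J v)) ∧ ∀ u v, ω (J u) (J v) = ω u v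

/-!
A compatible complex structure `J` with `J v = w` exists whenever `ω₁ v w > 0`: put the standard
structure `v ↦ w ↦ -v` on the plane spanned by `v, w` and extend it by a compatible structure on the
`ω₁`-orthogonal complement, constructed by induction on the dimension. Hence `ω₁ v w > 0` forces
`ω₂ v w > 0`, so the functional `ω₂ v` is a positive multiple of `ω₁ v` for every `v`. Transported
to the dual through the isomorphism `ω₁ : V ≃ V*`, `ω₂` becomes a linear map sending every vector to
a multiple of itself, hence a homothety.
-/

section LinearAlgebra

variable {K V W : Type*} [Field K] [LinearOrder K] [IsStrictOrderedRing K]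
  [AddCommGroup V] [Module K V]

theorem LinearMap.exists_pos_smul_eq_of_pos_imp_pos {f g : V →ₗ[K] K} (hf : f ≠ 0)
    (h : ∀ x, 0 < f x → 0 < g x) : ∃ c : K, 0 < c ∧ g = c • f := by
  obtain ⟨y, hy⟩ : ∃ y, 0 < f y := by
    obtain ⟨y, hy⟩ := DFunLike.ne_iff.1 hf
    rcases (show f y ≠ 0 from hy).lt_or_gt with hy | hy
    · exact ⟨-y, by simpa using hy⟩
    · exact ⟨y, hy⟩
  have hgy := h y hy
  -- if `f z = 0 > g z`, then `f > 0 = g` at `z - (g z / g y) • y`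
  have hnonneg : ∀ z, f z = 0 → 0 ≤ g z := by
    intro z hz
    by_contra! hneg
    have hf_pos : 0 < f (z - (g z / g y) • y) := by
      have := mul_pos_of_neg_of_neg (div_neg_of_neg_of_pos hneg hgy) (neg_neg_of_pos hy)
      simpa [hz] using this
    have := h _ hf_pos
    rw [map_sub, map_smul, smul_eq_mul, div_mul_cancel₀ _ hgy.ne', sub_self] at this
    exact this.false
  have hker : ∀ z, f z = 0 → g z = 0 := fun z hz =>
    le_antisymm (by simpa using hnonneg (-z) (by simp [hz])) (hnonneg z hz)
  refine ⟨g y / f y, div_pos hgy hy, LinearMap.ext fun x => ?_⟩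
  have := hker (x - (f x / f y) • y) (by simp [hy.ne'])
  simp only [map_sub, map_smul, smul_eq_mul, sub_eq_zero] at this
  simp only [LinearMap.smul_apply, smul_eq_mul, this]
  field_simp

theorem LinearEquiv.exists_pos_smul_eq_of_forall_exists_pos_smul_eq
    [AddCommGroup W] [Module K W] (e : V ≃ₗ[K] W) {g : V →ₗ[K] W}
    (h : ∀ v, ∃ c : K, 0 < c ∧ g v = c • e v) :
    ∃ a : K, 0 < a ∧ g = a • e.toLinearMap := by
  rcases subsingleton_or_nontrivial V with hV | hV
  · exact ⟨1, one_pos, LinearMap.ext fun v => by simp [Subsingleton.elim v 0]⟩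
  obtain ⟨a, ha⟩ : ∃ a : K, g ∘ₗ e.symm.toLinearMap = a • 1 := by
    refine LinearMap.exists_eq_smul_id_of_forall_notLinearIndependent fun x => ?_
    obtain ⟨c, -, hc⟩ := h (e.symm x)
    rw [LinearIndependent.pair_iff]
    push Not
    exact ⟨c, -1, by simp [hc], by norm_num⟩
  have hg : g = a • e.toLinearMap := LinearMap.ext fun v => by
    simpa using LinearMap.congr_fun ha (e v)
  refine ⟨a, ?_, hg⟩
  obtain ⟨v, hv⟩ := exists_ne (0 : V)
  obtain ⟨c, hc, hcv⟩ := h v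
  rw [hg] at hcv
  have : a = c := smul_left_injective K (e.map_ne_zero_iff.2 hv) hcv
  exact this ▸ hc

end LinearAlgebra

section Symplectic

variable {V : Type*} [AddCommGroup V] [Module ℝ V] {ω : V →ₗ[ℝ] V →ₗ[ℝ] ℝ}

theorem IsSymplecticForm.apply_ne_zero (hω : IsSymplecticForm ω) {v : V} (hv : v ≠ 0) :
    ω v ≠ 0 := fun h0 => by
  obtain ⟨w, hw⟩ := hω.2 v hv
  simp [h0] at hw

theorem IsSymplecticForm.injective (hω : IsSymplecticForm ω) : Function.Injective ω :=
  (injective_iff_map_eq_zero ω).2 fun _ hv => by_contra fun hne => hω.apply_ne_zero hne hv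

theorem IsSymplecticForm.isAlt (hω : IsSymplecticForm ω) : ω.IsAlt := hω.1

theorem IsSymplecticForm.exists_apply_pos (hω : IsSymplecticForm ω) {v : V} (hv : v ≠ 0) :
    ∃ w, 0 < ω v w := by
  obtain ⟨w, hw⟩ := hω.2 v hv
  rcases hw.lt_or_gt with hw | hw
  · exact ⟨-w, by simpa using hw⟩
  · exact ⟨w, hw⟩

theorem compatibleWith_smul_iff {c : ℝ} (hc : 0 < c) (J : V →ₗ[ℝ] V) :
    CompatibleWith (c • ω) J ↔ CompatibleWith ω J := by
  simp [CompatibleWith, mul_pos_iff_of_pos_left hc, mul_right_inj' hc.ne']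

variable (ω) (v w : V)

def planeCompl : Submodule ℝ V := LinearMap.ker (ω v) ⊓ LinearMap.ker (ω w)

variable {ω v w}

theorem mem_planeCompl {x : V} : x ∈ planeCompl ω v w ↔ ω v x = 0 ∧ ω w x = 0 := Iff.rfl

theorem apply_eq_zero_of_mem_planeCompl (hω : ω.IsAlt) {x : V} (hx : x ∈ planeCompl ω v w) :
    ω x v = 0 ∧ ω x w = 0 := by
  rw [← hω.neg v x, ← hω.neg w x, neg_eq_zero, neg_eq_zero]
  exact mem_planeCompl.1 hx

theorem planeCompl_ne_top (hω : ω.IsAlt) (hvw : ω v w ≠ 0) : planeCompl ω v w ≠ ⊤ :=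
  fun htop => hvw (apply_eq_zero_of_mem_planeCompl hω (htop ▸ Submodule.mem_top)).2

noncomputable def planeComplProj (hω : ω.IsAlt) (hvw : ω v w ≠ 0) : V →ₗ[ℝ] planeCompl ω v w :=
  LinearMap.codRestrict _
    (LinearMap.id - (ω v w)⁻¹ • ((ω v).smulRight w - (ω w).smulRight v)) fun u => by
      rw [mem_planeCompl]
      simp only [LinearMap.sub_apply, LinearMap.id_apply, LinearMap.smul_apply,
        LinearMap.smulRight_apply, map_sub, map_smul, smul_eq_mul, hω.self_eq_zero, ← hω.neg v w]
      constructor <;> field_simp <;> ring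

theorem planeComplProj_apply (hω : ω.IsAlt) (hvw : ω v w ≠ 0) (u : V) :
    (planeComplProj hω hvw u : V) = u - (ω v w)⁻¹ • (ω v u • w - ω w u • v) := rfl

theorem planeComplProj_coe (hω : ω.IsAlt) (hvw : ω v w ≠ 0) (x : planeCompl ω v w) :
    planeComplProj hω hvw x = x := by
  obtain ⟨hvx, hwx⟩ := mem_planeCompl.1 x.2
  ext
  simp [planeComplProj_apply, hvx, hwx]

theorem planeComplProj_left (hω : ω.IsAlt) (hvw : ω v w ≠ 0) : planeComplProj hω hvw v = 0 := by
  ext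
  simp [planeComplProj_apply, hω.self_eq_zero, ← hω.neg v w, hvw]

theorem planeComplProj_right (hω : ω.IsAlt) (hvw : ω v w ≠ 0) : planeComplProj hω hvw w = 0 := by
  ext
  simp [planeComplProj_apply, hω.self_eq_zero, hvw]

theorem exists_eq_plane_add_planeCompl (hω : ω.IsAlt) (hvw : ω v w ≠ 0) (u : V) :
    ∃ (a b : ℝ) (x : planeCompl ω v w), a • v + b • w + x = u := by
  refine ⟨-((ω v w)⁻¹ * ω w u), (ω v w)⁻¹ * ω v u, planeComplProj hω hvw u, ?_⟩
  rw [planeComplProj_apply]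
  module

theorem apply_plane_add_planeCompl (hω : ω.IsAlt) (a b a' b' : ℝ) (x x' : planeCompl ω v w) :
    ω (a • v + b • w + x) (a' • v + b' • w + x') = (a * b' - a' * b) * ω v w + ω x x' := by
  obtain ⟨hvx, hwx⟩ := mem_planeCompl.1 x'.2
  obtain ⟨hxv, hxw⟩ := apply_eq_zero_of_mem_planeCompl hω x.2
  simp only [map_add, map_smul, LinearMap.add_apply, LinearMap.smul_apply, smul_eq_mul,
    hω.self_eq_zero, ← hω.neg v w, hvx, hwx, hxv, hxw]
  ring

-- `v ↦ w ↦ -v` on the plane spanned by `v, w`, and `J'` on its complement (`planeExtend_apply`)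
noncomputable def planeExtend (hω : ω.IsAlt) (hvw : ω v w ≠ 0)
    (J' : planeCompl ω v w →ₗ[ℝ] planeCompl ω v w) : V →ₗ[ℝ] V :=
  (ω v w)⁻¹ • (-(ω v).smulRight v - (ω w).smulRight w) +
    (planeCompl ω v w).subtype ∘ₗ J' ∘ₗ planeComplProj hω hvw

theorem planeExtend_apply (hω : ω.IsAlt) (hvw : ω v w ≠ 0)
    (J' : planeCompl ω v w →ₗ[ℝ] planeCompl ω v w) (a b : ℝ) (x : planeCompl ω v w) :
    planeExtend hω hvw J' (a • v + b • w + x) = (-b) • v + a • w + J' x := by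
  obtain ⟨hvx, hwx⟩ := mem_planeCompl.1 x.2
  have hJv : planeExtend hω hvw J' v = w := by
    simp [planeExtend, planeComplProj_left, hω.self_eq_zero, ← hω.neg v w, hvw]
  have hJw : planeExtend hω hvw J' w = -v := by
    simp [planeExtend, planeComplProj_right, hω.self_eq_zero, hvw]
  have hJx : planeExtend hω hvw J' x = J' x := by
    simp [planeExtend, planeComplProj_coe, hvx, hwx]
  rw [map_add, map_add, map_smul, map_smul, hJv, hJw, hJx]
  module

theorem planeExtend_isComplexStructure (hω : ω.IsAlt) (hvw : ω v w ≠ 0)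
    {J' : planeCompl ω v w →ₗ[ℝ] planeCompl ω v w} (hJ' : IsComplexStructure J') :
    IsComplexStructure (planeExtend hω hvw J') := by
  intro u
  obtain ⟨a, b, x, rfl⟩ := exists_eq_plane_add_planeCompl hω hvw u
  rw [planeExtend_apply, planeExtend_apply, hJ']
  simp only [Submodule.coe_neg]
  module

theorem planeExtend_compatibleWith (hω : ω.IsAlt) (hvw : 0 < ω v w)
    {J' : planeCompl ω v w →ₗ[ℝ] planeCompl ω v w}
    (hJ' : CompatibleWith (ω.domRestrict₁₂ (planeCompl ω v w) (planeCompl ω v w)) J') :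
    CompatibleWith ω (planeExtend hω hvw.ne' J') := by
  refine ⟨fun u hu => ?_, fun u u' => ?_⟩
  · obtain ⟨a, b, x, rfl⟩ := exists_eq_plane_add_planeCompl hω hvw.ne' u
    rw [planeExtend_apply, apply_plane_add_planeCompl hω,
      show (a * a - -b * b) * ω v w = (a ^ 2 + b ^ 2) * ω v w by ring]
    rcases eq_or_ne x 0 with rfl | hx
    · have hab : a ≠ 0 ∨ b ≠ 0 := by
        by_contra! hab
        exact hu (by simp [hab.1, hab.2])
      have : 0 < a ^ 2 + b ^ 2 := by
        rcases hab with h | h <;> positivity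
      simp only [ZeroMemClass.coe_zero, map_zero, add_zero]
      positivity
    · have := hJ'.1 x hx
      rw [LinearMap.domRestrict₁₂_apply] at this
      positivity
  · obtain ⟨a, b, x, rfl⟩ := exists_eq_plane_add_planeCompl hω hvw.ne' u
    obtain ⟨a', b', x', rfl⟩ := exists_eq_plane_add_planeCompl hω hvw.ne' u'
    rw [planeExtend_apply, planeExtend_apply, apply_plane_add_planeCompl hω,
      apply_plane_add_planeCompl hω]
    have := hJ'.2 x x'
    simp only [LinearMap.domRestrict₁₂_apply] at this
    rw [this]
    ring

theorem IsSymplecticForm.domRestrict_planeCompl (hω : IsSymplecticForm ω) (hvw : ω v w ≠ 0) :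
    IsSymplecticForm (ω.domRestrict₁₂ (planeCompl ω v w) (planeCompl ω v w)) := by
  refine ⟨fun x => hω.isAlt.self_eq_zero x, fun x hx => ?_⟩
  obtain ⟨y, hy⟩ := hω.2 x (by simpa using hx)
  obtain ⟨hxv, hxw⟩ := apply_eq_zero_of_mem_planeCompl hω.isAlt x.2
  refine ⟨planeComplProj hω.isAlt hvw y, ?_⟩
  rw [LinearMap.domRestrict₁₂_apply, planeComplProj_apply]
  simpa [hxv, hxw] using hy

theorem IsSymplecticForm.exists_compatibleWith [FiniteDimensional ℝ V]
    (hω : IsSymplecticForm ω) : ∃ J, IsComplexStructure J ∧ CompatibleWith ω J := by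
  induction hn : Module.finrank ℝ V using Nat.strong_induction_on generalizing V with
  | _ n ih =>
  rcases subsingleton_or_nontrivial V with hV | hV
  · exact ⟨0, fun u => Subsingleton.elim _ _, fun u hu => (hu (Subsingleton.elim u 0)).elim,
      fun u u' => by simp [Subsingleton.elim u 0]⟩
  obtain ⟨v, hv⟩ := exists_ne (0 : V)
  obtain ⟨w, hvw⟩ := hω.exists_apply_pos hv
  obtain ⟨J', hJ', hcompat⟩ :=
    ih _ (hn ▸ Submodule.finrank_lt (planeCompl_ne_top hω.isAlt hvw.ne'))
      (hω.domRestrict_planeCompl hvw.ne') rfl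
  exact ⟨_, planeExtend_isComplexStructure hω.isAlt hvw.ne' hJ',
    planeExtend_compatibleWith hω.isAlt hvw hcompat⟩

theorem IsSymplecticForm.exists_compatibleWith_apply_eq [FiniteDimensional ℝ V]
    (hω : IsSymplecticForm ω) (hvw : 0 < ω v w) :
    ∃ J, IsComplexStructure J ∧ CompatibleWith ω J ∧ J v = w := by
  obtain ⟨J', hJ', hcompat⟩ := (hω.domRestrict_planeCompl hvw.ne').exists_compatibleWith
  refine ⟨_, planeExtend_isComplexStructure hω.isAlt hvw.ne' hJ',
    planeExtend_compatibleWith hω.isAlt hvw hcompat, ?_⟩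
  simpa using planeExtend_apply hω.isAlt hvw.ne' J' 1 0 0

end Symplectic

theorem compatibility_determines_form_up_to_positive_scalar_general
    {V : Type*} [AddCommGroup V] [Module ℝ V] [FiniteDimensional ℝ V]
    (ω₁ ω₂ : V →ₗ[ℝ] V →ₗ[ℝ] ℝ)
    (h₁ : IsSymplecticForm ω₁)
    (h : ∀ J : V →ₗ[ℝ] V, IsComplexStructure J → CompatibleWith ω₁ J →
      CompatibleWith ω₂ J) :
    ∃ lam : ℝ, 0 < lam ∧ ω₂ = lam • ω₁ ∧
      ∀ J : V →ₗ[ℝ] V, IsComplexStructure J →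
        (CompatibleWith ω₁ J ↔ CompatibleWith ω₂ J) := by
  have htame : ∀ v w, 0 < ω₁ v w → 0 < ω₂ v w := fun v w hvw => by
    obtain ⟨J, hJ, hcompat, rfl⟩ := h₁.exists_compatibleWith_apply_eq hvw
    exact (h J hJ hcompat).1 v (by rintro rfl; simp at hvw)
  have hrow : ∀ v, ∃ c : ℝ, 0 < c ∧ ω₂ v = c • ω₁ v := fun v => by
    rcases eq_or_ne v 0 with rfl | hv
    · exact ⟨1, one_pos, by simp⟩
    · exact LinearMap.exists_pos_smul_eq_of_pos_imp_pos (h₁.apply_ne_zero hv) (htame v)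
  obtain ⟨lam, hlam, hω⟩ := (LinearMap.linearEquivOfInjective ω₁ h₁.injective
    Subspace.dual_finrank_eq.symm).exists_pos_smul_eq_of_forall_exists_pos_smul_eq hrow
  refine ⟨lam, hlam, hω, fun J _ => ?_⟩
  rw [hω]
  exact (compatibleWith_smul_iff hlam J).symm

theorem compatibility_determines_form_up_to_positive_scalar
    {V : Type*} [AddCommGroup V] [Module ℝ V] [FiniteDimensional ℝ V]
    (ω₁ ω₂ : V →ₗ[ℝ] V →ₗ[ℝ] ℝ)
    (h₁ : IsSymplecticForm ω₁) (h₂ : IsSymplecticForm ω₂)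
    (h : ∀ J : V →ₗ[ℝ] V, IsComplexStructure J → CompatibleWith ω₁ J →
      CompatibleWith ω₂ J) :
    ∃ lam : ℝ, 0 < lam ∧ ω₂ = lam • ω₁ ∧
      ∀ J : V →ₗ[ℝ] V, IsComplexStructure J →
        (CompatibleWith ω₁ J ↔ CompatibleWith ω₂ J) :=
  compatibility_determines_form_up_to_positive_scalar_general ω₁ ω₂ h₁ h
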